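/- arXiv:2302.04413 — 2 statements merged into one kernel-verified Lean document; each statement's English description precedes it below -/
import Mathlib

section
/- If M, B : ℝ → ℝ are continuous with M(t) ≥ 0 and B(t) ≥ 0, F₀ > 0, F is differentiable and satisfies F'(t) + (M(t)+B(t))·F(t) = F₀·B(t), and 0 ≤ F(0) ≤ F₀, then 0 ≤ F(t) ≤ F₀ for all t ≥ 0. -/
/-!
With the integrating factor `e^a`, `a t = ∫₀ᵗ (M + B)`, the equation becomes
`(F e^a)' = F₀ B e^a ≥ 0`, and equivalently `((F₀ - F) e^a)' = F₀ M e^a ≥ 0`. So `F e^a` and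
`(F₀ - F) e^a` are nondecreasing, and `F` and `F₀ - F` keep the sign they have at `t = 0`.
-/

open Real

theorem monotone_mul_exp_integral_of_deriv_add_mul_nonneg {y c : ℝ → ℝ} (hc : Continuous c)
    (hy : Differentiable ℝ y) (hode : ∀ t, 0 ≤ deriv y t + c t * y t) :
    Monotone fun t => y t * exp (∫ s in (0 : ℝ)..t, c s) := by
  have hint : ∀ t, HasDerivAt (fun t => ∫ s in (0 : ℝ)..t, c s) (c t) t := fun t =>
    intervalIntegral.integral_hasDerivAt_right (hc.intervalIntegrable 0 t)
      hc.aestronglyMeasurable.stronglyMeasurableAtFilter hc.continuousAt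
  have hderiv : ∀ t, HasDerivAt (fun t => y t * exp (∫ s in (0 : ℝ)..t, c s))
      ((deriv y t + c t * y t) * exp (∫ s in (0 : ℝ)..t, c s)) t := fun t =>
    ((hy t).hasDerivAt.mul (hint t).exp).congr_deriv (by ring)
  refine monotone_of_deriv_nonneg (fun t => (hderiv t).differentiableAt) fun t => ?_
  rw [(hderiv t).deriv]
  exact mul_nonneg (hode t) (exp_pos _).le

theorem nonneg_of_deriv_add_mul_nonneg {y c : ℝ → ℝ} (hc : Continuous c)
    (hy : Differentiable ℝ y) (hode : ∀ t, 0 ≤ deriv y t + c t * y t) {s t : ℝ}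
    (hs : 0 ≤ y s) (hst : s ≤ t) : 0 ≤ y t := by
  have hmono := monotone_mul_exp_integral_of_deriv_add_mul_nonneg hc hy hode hst
  exact (mul_nonneg_iff_of_pos_right (exp_pos _)).mp
    ((mul_nonneg hs (exp_pos _).le).trans hmono)

theorem stmt_8 (F M B : ℝ → ℝ) (F₀ : ℝ) (hF₀ : 0 < F₀)
    (hM : Continuous M) (hB : Continuous B)
    (hMnn : ∀ t, 0 ≤ M t) (hBnn : ∀ t, 0 ≤ B t)
    (hdiff : Differentiable ℝ F)
    (hode : ∀ t, deriv F t + (M t + B t) * F t = F₀ * B t)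
    (hinit : 0 ≤ F 0 ∧ F 0 ≤ F₀) :
    ∀ t, 0 ≤ t → 0 ≤ F t ∧ F t ≤ F₀ := by
  intro t ht
  have hc : Continuous fun t => M t + B t := hM.add hB
  have hF_ode : ∀ t, 0 ≤ deriv F t + (M t + B t) * F t := fun t => by
    rw [hode t]
    exact mul_nonneg hF₀.le (hBnn t)
  have hgap_ode : ∀ t, 0 ≤ deriv (fun t => F₀ - F t) t + (M t + B t) * (F₀ - F t) :=
    fun t => by
      rw [deriv_const_sub]
      linarith [hode t, mul_nonneg hF₀.le (hMnn t)]
  refine ⟨nonneg_of_deriv_add_mul_nonneg hc hdiff hF_ode hinit.1 ht, ?_⟩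
  have := nonneg_of_deriv_add_mul_nonneg (y := fun t => F₀ - F t) hc
    ((differentiable_const F₀).sub hdiff) hgap_ode (sub_nonneg.mpr hinit.2) ht
  linarith
end

section
/- Define Ω(t) = exp(λt − ωt²/2) with ω > 0, and let F solve F'(t) + (λ − ωt)·F(t) = F₀·(α − βt). Then F(t)/F₀ = (1/Ω(t))·{ F(0)/F₀ − (β/ω)·(1 − Ω(t)) + (αω − βλ)·(√(π/2)·e^{Λ²}/ω^{3/2})·[erf(Λ) + erf(ωt/√(2ω) − Λ)] }, where Λ = λ/√(2ω) and erf(z) = (2/√π)∫₀ᶻ e^{−τ²} dτ. -/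
/-!
`Ω` is an integrating factor: `Ω' = (λ - ω t) Ω`, so the equation says `(Ω F)' = F₀ (α - β t) Ω`.
Split `(α - β t) Ω = (β / ω) Ω' + ((α ω - β λ) / ω) Ω`; the first term integrates to `(β / ω) Ω`,
and completing the square, `Ω(t) = e^{Λ²} e^{-(ω t / √(2ω) - Λ)²}`, turns the second into an
`erf`. The constant is fixed at `t = 0`, where `Ω = 1` and `erf` is odd.
-/

open Real

/-- The error function: erf z = (2/√π) ∫₀ᶻ e^{−τ²} dτ. -/
noncomputable def erf (z : ℝ) : ℝ :=
  (2 / Real.sqrt π) * ∫ τ in (0:ℝ)..z, Real.exp (-τ ^ 2)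

lemma erf_hasDerivAt (z : ℝ) : HasDerivAt erf (2 / √π * exp (-z ^ 2)) z := by
  have hc : Continuous fun τ : ℝ => exp (-τ ^ 2) := by fun_prop
  exact (hc.integral_hasStrictDerivAt 0 z).hasDerivAt.const_mul (2 / √π)

lemma erf_neg (z : ℝ) : erf (-z) = -erf z := by
  have h : ∫ τ in (0 : ℝ)..-z, exp (-τ ^ 2) = -∫ τ in (0 : ℝ)..z, exp (-τ ^ 2) := by
    rw [intervalIntegral.integral_symm, ← neg_zero,
      ← intervalIntegral.integral_comp_neg fun τ => exp (-τ ^ 2), neg_zero]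
    simp only [even_two, Even.neg_pow]
  rw [erf, erf, h, mul_neg]

lemma mul_sub_antideriv_eq_of_integratingFactor {F Ω I a b : ℝ → ℝ} (hF : Differentiable ℝ F)
    (hΩ : ∀ u, HasDerivAt Ω (a u * Ω u) u) (hI : ∀ u, HasDerivAt I (b u * Ω u) u)
    (hode : ∀ u, deriv F u + a u * F u = b u) (t : ℝ) :
    Ω t * F t - I t = Ω 0 * F 0 - I 0 := by
  have hderiv : ∀ u, HasDerivAt (fun u => Ω u * F u - I u) 0 u := fun u => by
    refine (((hΩ u).mul (hF u).hasDerivAt).sub (hI u)).congr_deriv ?_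
    rw [← hode u]
    ring
  exact is_const_of_deriv_eq_zero (fun u => (hderiv u).differentiableAt)
    (fun u => (hderiv u).deriv) t 0

lemma sqrt_half_pi_div_rpow_three_halves_mul_eq_one_div {ω : ℝ} (hω : 0 < ω) :
    √(π / 2) / ω ^ ((3 : ℝ) / 2) * (2 / √π) * (ω / √(2 * ω)) = 1 / ω := by
  have hrpow : ω ^ ((3 : ℝ) / 2) = ω * √ω := by
    rw [show (3 : ℝ) / 2 = 1 + 1 / 2 by norm_num, rpow_add hω, rpow_one, ← sqrt_eq_rpow]
  have h2 : √2 ^ 2 = 2 := sq_sqrt (by norm_num)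
  have hω' : √ω ^ 2 = ω := sq_sqrt hω.le
  have hπ : 0 < √π := sqrt_pos.mpr pi_pos
  have hsω : 0 < √ω := sqrt_pos.mpr hω
  rw [sqrt_div' π (by norm_num), sqrt_mul (by norm_num), hrpow]
  field_simp
  rw [h2, hω']
  ring

section GaussianWeight

variable (lam ω : ℝ)

/-- The paper's `Ω(t)`. -/
noncomputable def gaussWeight (t : ℝ) : ℝ := exp (lam * t - ω * t ^ 2 / 2)

lemma gaussWeight_zero : gaussWeight lam ω 0 = 1 := by simp [gaussWeight]

lemma gaussWeight_hasDerivAt (t : ℝ) :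
    HasDerivAt (gaussWeight lam ω) ((lam - ω * t) * gaussWeight lam ω t) t := by
  have h : HasDerivAt (fun u : ℝ => lam * u - ω * u ^ 2 / 2) (lam - ω * t) t := by
    refine (((hasDerivAt_id t).const_mul lam).sub
      (((hasDerivAt_pow 2 t).const_mul ω).div_const 2)).congr_deriv ?_
    simp only [Nat.cast_ofNat]
    ring
  exact h.exp.congr_deriv (mul_comm _ _)

/-- Completing the square in the exponent. -/
lemma exp_neg_sq_eq_gaussWeight_mul (hω : 0 < ω) (t : ℝ) :
    exp (-(ω * t / √(2 * ω) - lam / √(2 * ω)) ^ 2) =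
      gaussWeight lam ω t * exp (-(lam / √(2 * ω)) ^ 2) := by
  have hs : √(2 * ω) ^ 2 = 2 * ω := sq_sqrt (by positivity)
  have hs0 : √(2 * ω) ≠ 0 := (sqrt_pos.mpr (by positivity)).ne'
  rw [gaussWeight, ← exp_add, div_sub_div_same, div_pow, div_pow, hs]
  congr 1
  field_simp
  ring

/-- `Ω(t) F(t) / F₀ - F(0) / F₀` in the closed-form solution. -/
noncomputable def particularPart (α β t : ℝ) : ℝ :=
  -(β / ω) * (1 - gaussWeight lam ω t) +
    (α * ω - β * lam) *
      (√(π / 2) * exp ((lam / √(2 * ω)) ^ 2) / ω ^ ((3 : ℝ) / 2)) *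
      (erf (lam / √(2 * ω)) + erf (ω * t / √(2 * ω) - lam / √(2 * ω)))

lemma particularPart_zero (α β : ℝ) : particularPart lam ω α β 0 = 0 := by
  simp [particularPart, gaussWeight_zero, erf_neg]

lemma particularPart_hasDerivAt (hω : 0 < ω) (α β t : ℝ) :
    HasDerivAt (particularPart lam ω α β) ((α - β * t) * gaussWeight lam ω t) t := by
  have hlin : HasDerivAt (fun u : ℝ => ω * u / √(2 * ω) - lam / √(2 * ω)) (ω / √(2 * ω)) t := by
    simpa using (((hasDerivAt_id t).const_mul ω).div_const _).sub_const (lam / √(2 * ω))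
  have herf := (erf_hasDerivAt _).comp t hlin
  rw [exp_neg_sq_eq_gaussWeight_mul lam ω hω] at herf
  have hweight := ((hasDerivAt_const t 1).sub (gaussWeight_hasDerivAt lam ω t)).const_mul (-(β / ω))
  have herfSum := ((hasDerivAt_const t (erf (lam / √(2 * ω)))).add herf).const_mul
    ((α * ω - β * lam) * (√(π / 2) * exp ((lam / √(2 * ω)) ^ 2) / ω ^ ((3 : ℝ) / 2)))
  refine (hweight.add herfSum).congr_deriv ?_
  have hexp : exp ((lam / √(2 * ω)) ^ 2) * exp (-(lam / √(2 * ω)) ^ 2) = 1 := by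
    rw [← exp_add]; simp
  have hinv : ω * ω⁻¹ = 1 := mul_inv_cancel₀ hω.ne'
  linear_combination (α * ω - β * lam) * gaussWeight lam ω t *
      (exp ((lam / √(2 * ω)) ^ 2) * exp (-(lam / √(2 * ω)) ^ 2) *
        sqrt_half_pi_div_rpow_three_halves_mul_eq_one_div hω + ω⁻¹ * hexp) +
    (α - β * t) * gaussWeight lam ω t * hinv

end GaussianWeight

theorem stmt_13_general (F : ℝ → ℝ) (F₀ α β lam ω : ℝ)
    (hF₀ : 0 < F₀) (hω : 0 < ω)
    (hdiff : Differentiable ℝ F)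
    (hode : ∀ t, deriv F t + (lam - ω * t) * F t = F₀ * (α - β * t)) :
    ∀ t, F t / F₀ =
      (1 / Real.exp (lam * t - ω * t ^ 2 / 2)) *
        (F 0 / F₀ - (β / ω) * (1 - Real.exp (lam * t - ω * t ^ 2 / 2)) +
          (α * ω - β * lam) *
            (Real.sqrt (π / 2) * Real.exp ((lam / Real.sqrt (2 * ω)) ^ 2) /
              ω ^ ((3 : ℝ) / 2)) *
            (erf (lam / Real.sqrt (2 * ω)) +
              erf (ω * t / Real.sqrt (2 * ω) - lam / Real.sqrt (2 * ω)))) := by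
  intro t
  have hsol := mul_sub_antideriv_eq_of_integratingFactor hdiff (gaussWeight_hasDerivAt lam ω)
    (I := fun u => F₀ * particularPart lam ω α β u)
    (fun u => ((particularPart_hasDerivAt lam ω hω α β u).const_mul F₀).congr_deriv (by ring))
    hode t
  rw [gaussWeight_zero, particularPart_zero] at hsol
  have hΩ : gaussWeight lam ω t ≠ 0 := (exp_pos _).ne'
  calc F t / F₀ = 1 / gaussWeight lam ω t * (F 0 / F₀ + particularPart lam ω α β t) := by
        field_simp
        linear_combination hsol
    _ = _ := by rw [particularPart, gaussWeight]; ring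

theorem stmt_13 (F : ℝ → ℝ) (F₀ α β ν μ lam ω : ℝ)
    (hF₀ : 0 < F₀) (hω : 0 < ω) (hlam : lam = α + ν) (hom : ω = β + μ)
    (hdiff : Differentiable ℝ F)
    (hode : ∀ t, deriv F t + (lam - ω * t) * F t = F₀ * (α - β * t)) :
    ∀ t, F t / F₀ =
      (1 / Real.exp (lam * t - ω * t ^ 2 / 2)) *
        (F 0 / F₀ - (β / ω) * (1 - Real.exp (lam * t - ω * t ^ 2 / 2)) +
          (α * ω - β * lam) *
            (Real.sqrt (π / 2) * Real.exp ((lam / Real.sqrt (2 * ω)) ^ 2) /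
              ω ^ ((3 : ℝ) / 2)) *
            (erf (lam / Real.sqrt (2 * ω)) +
              erf (ω * t / Real.sqrt (2 * ω) - lam / Real.sqrt (2 * ω)))) :=
  stmt_13_general F F₀ α β lam ω hF₀ hω hdiff hode
end
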